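/- arXiv:1609.00936 — 2 statements merged into one kernel-verified Lean document; each statement's English description precedes it below -/
import Mathlib

section
/- Let 1 < p ≤ 2 and E(f) = ‖f‖_p² on X = L^p(Ω,μ), with pairing ⟨f,g⟩ = 2Re∫f*g dμ. Then for all f₁, f₂ ∈ X: E(f₂) ≥ E(f₁) + ⟨f₂-f₁, ∇E(f₁)⟩ + (p-1)‖f₂-f₁‖_p², i.e., the squared L^p norm is (p-1)-convex. -/
open MeasureTheory

noncomputable section

/-- The `L^p` norm (with real exponent `p`) of `f`. -/
def np {Ω : Type*} [MeasurableSpace Ω] (μ : Measure Ω) (p : ℝ) (f : Ω → ℂ) : ℝ :=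
  (eLpNorm f (ENNReal.ofReal p) μ).toReal

/-- The real pairing `⟨f,g⟩ = 2 Re ∫ f* g dμ`. -/
def pairL {Ω : Type*} [MeasurableSpace Ω] (μ : Measure Ω) (f g : Ω → ℂ) : ℝ :=
  2 * (∫ x, (starRingEnd ℂ) (f x) * g x ∂μ).re

/-- The gradient `∇E(f) = ‖f‖_p^{2-p} |f|^{p-1} sgn f = ‖f‖_p^{2-p} |f|^{p-2} f`
of `E(f) = ‖f‖_p²`. -/
def gradE {Ω : Type*} [MeasurableSpace Ω] (μ : Measure Ω) (p : ℝ) (f : Ω → ℂ) : Ω → ℂ :=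
  fun x => ((np μ p f ^ (2 - p) * ‖f x‖ ^ (p - 2) : ℝ)) • f x


/-!
The scalar core is the two-point inequality of Ball, Carlen and Lieb,
`2 (|a|² + (p-1)|b|²)^{p/2} ≤ |a+b|^p + |a-b|^p`. For reals `0 ≤ b ≤ a` it follows, with
`r = b/a`, from `(1+r)^p + (1-r)^p ≥ 2 + p(p-1)r²` (two monotonicity arguments) and Bernoulli's
inequality for the exponent `p/2 ≤ 1`; for vectors, `|a ± b|² = |a|² + |b|² ± 2⟪a, b⟫` and
concavity of `x ↦ x^{p/2}` reduce it to the real case. Integrating it and applying the reverse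
Minkowski inequality in `L^{p/2}` to `|u|²` and `(p-1)|v|²` gives the 2-uniform convexity of `L^p`,
`2‖u‖² + 2(p-1)‖v‖² ≤ ‖u+v‖² + ‖u-v‖²`.

On the segment `ψ(t) = ‖f₁ + t(f₂-f₁)‖²` this says that `ψ(t) - (p-1)‖f₂-f₁‖² t²` is midpoint
convex, while Hölder's inequality (`∇E(f)` has `L^{p'}` norm `‖f‖`) gives the tangent bound
`ψ(t) ≥ ψ(0) + t ⟨f₂-f₁, ∇E(f₁)⟩`. Iterating the midpoint inequality at `t = 2⁻ⁿ` carries this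
slope bound at `0` out to `t = 1`.
-/

open Set Complex ComplexConjugate
open scoped ENNReal

section TwoPoint

lemma monotoneOn_Icc_of_hasDerivAt_nonneg {g g' : ℝ → ℝ} {a b : ℝ} (hc : ContinuousOn g (Icc a b))
    (hd : ∀ x ∈ Ioo a b, HasDerivAt g (g' x) x) (hnn : ∀ x ∈ Ioo a b, 0 ≤ g' x) :
    MonotoneOn g (Icc a b) := by
  refine monotoneOn_of_hasDerivWithinAt_nonneg (f' := g') (convex_Icc a b) hc ?_ ?_ <;>
    rw [interior_Icc]
  · exact fun x hx => (hd x hx).hasDerivWithinAt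
  · exact hnn

lemma hasDerivAt_one_add_rpow (a : ℝ) {r : ℝ} (hr : -1 < r) :
    HasDerivAt (fun x => (1 + x) ^ a) (a * (1 + r) ^ (a - 1)) r := by
  simpa using ((hasDerivAt_id r).const_add 1).rpow_const (p := a) (Or.inl (by simp; linarith))

lemma hasDerivAt_one_sub_rpow (a : ℝ) {r : ℝ} (hr : r < 1) :
    HasDerivAt (fun x => (1 - x) ^ a) (-(a * (1 - r) ^ (a - 1))) r := by
  simpa using ((hasDerivAt_id r).const_sub 1).rpow_const (p := a) (Or.inl (by simp; linarith))

lemma two_le_one_add_rpow_add_one_sub_rpow {r q : ℝ} (hr0 : 0 ≤ r) (hr1 : r < 1) (hq : q ≤ 0) :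
    2 ≤ (1 + r) ^ q + (1 - r) ^ q := by
  have ha : 0 < (1 + r) ^ q := by apply Real.rpow_pos_of_pos; linarith
  have hb : 0 < (1 - r) ^ q := by apply Real.rpow_pos_of_pos; linarith
  have hab : 1 ≤ (1 + r) ^ q * (1 - r) ^ q := by
    rw [← Real.mul_rpow (by linarith) (by linarith)]
    exact Real.one_le_rpow_of_pos_of_le_one_of_nonpos (by nlinarith) (by nlinarith) hq
  nlinarith [sq_nonneg ((1 + r) ^ q - (1 - r) ^ q)]

lemma two_mul_sub_one_mul_le_one_add_rpow_sub_one_sub_rpow {p r : ℝ} (hp1 : 1 ≤ p) (hp2 : p ≤ 2)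
    (hr0 : 0 ≤ r) (hr1 : r ≤ 1) :
    2 * (p - 1) * r ≤ (1 + r) ^ (p - 1) - (1 - r) ^ (p - 1) := by
  have hp1' : 0 ≤ p - 1 := by linarith
  have hmono := monotoneOn_Icc_of_hasDerivAt_nonneg
    (g := fun x => (1 + x) ^ (p - 1) - (1 - x) ^ (p - 1) - 2 * (p - 1) * x)
    (g' := fun x => (p - 1) * ((1 + x) ^ (p - 2) + (1 - x) ^ (p - 2) - 2))
    (by fun_prop (disch := first | assumption | intro; right; assumption)) (fun x hx => ?_)
    (fun x hx => mul_nonneg hp1' (by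
      linarith [two_le_one_add_rpow_add_one_sub_rpow hx.1.le hx.2 (by linarith : p - 2 ≤ 0)]))
  · have := hmono ⟨le_rfl, zero_le_one⟩ ⟨hr0, hr1⟩ hr0
    norm_num at this
    linarith
  · refine (((hasDerivAt_one_add_rpow (p - 1) (by linarith [hx.1])).sub
      (hasDerivAt_one_sub_rpow (p - 1) hx.2)).sub
      ((hasDerivAt_id' x).const_mul (2 * (p - 1)))).congr_deriv ?_
    rw [show p - 1 - 1 = p - 2 by ring]
    ring

lemma two_add_mul_sq_le_one_add_rpow_add_one_sub_rpow {p r : ℝ} (hp1 : 1 ≤ p) (hp2 : p ≤ 2)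
    (hr0 : 0 ≤ r) (hr1 : r ≤ 1) :
    2 + p * (p - 1) * r ^ 2 ≤ (1 + r) ^ p + (1 - r) ^ p := by
  have hp0 : 0 ≤ p := by linarith
  have hmono := monotoneOn_Icc_of_hasDerivAt_nonneg
    (g := fun x => (1 + x) ^ p + (1 - x) ^ p - 2 - p * (p - 1) * x ^ 2)
    (g' := fun x => p * ((1 + x) ^ (p - 1) - (1 - x) ^ (p - 1) - 2 * (p - 1) * x))
    (by fun_prop (disch := first | assumption | intro; right; assumption)) (fun x hx => ?_)
    (fun x hx => mul_nonneg hp0 (by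
      linarith [two_mul_sub_one_mul_le_one_add_rpow_sub_one_sub_rpow hp1 hp2 hx.1.le hx.2.le]))
  · have := hmono ⟨le_rfl, zero_le_one⟩ ⟨hr0, hr1⟩ hr0
    norm_num at this
    linarith
  · refine (((hasDerivAt_one_add_rpow p (by linarith [hx.1])).add
      (hasDerivAt_one_sub_rpow p hx.2)).sub_const 2 |>.sub
      ((hasDerivAt_pow 2 x).const_mul (p * (p - 1)))).congr_deriv ?_
    simp
    ring

lemma sq_rpow_half (x p : ℝ) : (x ^ 2) ^ (p / 2) = |x| ^ p := by
  rw [← sq_abs, ← Real.rpow_natCast, ← Real.rpow_mul (abs_nonneg x)]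
  congr 1
  ring

lemma two_mul_sq_add_rpow_le_of_le {p s t : ℝ} (hp1 : 1 ≤ p) (hp2 : p ≤ 2) (ht : 0 ≤ t)
    (hts : t ≤ s) :
    2 * (s ^ 2 + (p - 1) * t ^ 2) ^ (p / 2) ≤ (s + t) ^ p + (s - t) ^ p := by
  obtain rfl | hs := (ht.trans hts).eq_or_lt
  · obtain rfl : t = 0 := le_antisymm hts ht
    simp [Real.zero_rpow (by positivity : p / 2 ≠ 0), Real.zero_rpow (by positivity : p ≠ 0)]
  obtain ⟨r, hr0, hr1, rfl⟩ : ∃ r, 0 ≤ r ∧ r ≤ 1 ∧ t = s * r :=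
    ⟨t / s, div_nonneg ht hs.le, div_le_one_of_le₀ hts hs.le, by field_simp⟩
  have hbern : (1 + (p - 1) * r ^ 2) ^ (p / 2) ≤ 1 + p / 2 * ((p - 1) * r ^ 2) :=
    rpow_one_add_le_one_add_mul_self (by nlinarith) (by positivity) (by linarith)
  calc 2 * (s ^ 2 + (p - 1) * (s * r) ^ 2) ^ (p / 2)
      = s ^ p * (2 * (1 + (p - 1) * r ^ 2) ^ (p / 2)) := by
        rw [show s ^ 2 + (p - 1) * (s * r) ^ 2 = s ^ 2 * (1 + (p - 1) * r ^ 2) by ring,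
          Real.mul_rpow (by positivity) (by nlinarith), sq_rpow_half, abs_of_pos hs]
        ring
    _ ≤ s ^ p * ((1 + r) ^ p + (1 - r) ^ p) := by
        gcongr
        linarith [two_add_mul_sq_le_one_add_rpow_add_one_sub_rpow hp1 hp2 hr0 hr1]
    _ = (s + s * r) ^ p + (s - s * r) ^ p := by
        rw [mul_add, ← Real.mul_rpow hs.le (by linarith), ← Real.mul_rpow hs.le (by linarith)]
        ring_nf

lemma two_mul_sq_add_rpow_le {p s t : ℝ} (hp1 : 1 ≤ p) (hp2 : p ≤ 2) (hs : 0 ≤ s) (ht : 0 ≤ t) :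
    2 * (s ^ 2 + (p - 1) * t ^ 2) ^ (p / 2) ≤ (s + t) ^ p + |s - t| ^ p := by
  rcases le_total t s with hts | hst
  · rw [abs_of_nonneg (by linarith)]
    exact two_mul_sq_add_rpow_le_of_le hp1 hp2 ht hts
  · have hswap : s ^ 2 + (p - 1) * t ^ 2 ≤ t ^ 2 + (p - 1) * s ^ 2 := by
      nlinarith [mul_nonneg (by linarith : 0 ≤ 2 - p) (mul_nonneg (by linarith : 0 ≤ t - s)
        (by linarith : 0 ≤ t + s))]
    calc 2 * (s ^ 2 + (p - 1) * t ^ 2) ^ (p / 2) ≤ 2 * (t ^ 2 + (p - 1) * s ^ 2) ^ (p / 2) := by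
          gcongr
      _ ≤ (t + s) ^ p + (t - s) ^ p := two_mul_sq_add_rpow_le_of_le hp1 hp2 hs hst
      _ = (s + t) ^ p + |s - t| ^ p := by rw [add_comm t, abs_of_nonpos (by linarith), neg_sub]

lemma ConcaveOn.add_le_add_sub {φ : ℝ → ℝ} {s : Set ℝ} (hφ : ConcaveOn ℝ s φ) {x y z : ℝ}
    (hx : x ∈ s) (hz : z ∈ s) (hxy : x ≤ y) (hyz : y ≤ z) :
    φ x + φ z ≤ φ y + φ (x + z - y) := by
  obtain rfl | hxz := (hxy.trans hyz).eq_or_lt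
  · obtain rfl : y = x := le_antisymm hyz hxy
    simp
  set l := (z - y) / (z - x)
  have hl : l * (z - x) = z - y := div_mul_cancel₀ _ (by linarith)
  have hl0 : 0 ≤ l := div_nonneg (by linarith) (by linarith)
  have hl1 : 0 ≤ 1 - l := by
    rw [sub_nonneg, div_le_one (by linarith)]
    linarith
  have hy := hφ.2 hx hz hl0 hl1 (by ring)
  have hw := hφ.2 hx hz hl1 hl0 (by ring)
  simp only [smul_eq_mul] at hy hw
  rw [show l * x + (1 - l) * z = y by linear_combination -hl] at hy
  rw [show (1 - l) * x + l * z = x + z - y by linear_combination hl] at hw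
  linarith

lemma two_mul_norm_sq_add_rpow_le {E : Type*} [NormedAddCommGroup E] [InnerProductSpace ℝ E]
    {p : ℝ} (hp1 : 1 ≤ p) (hp2 : p ≤ 2) (a b : E) :
    2 * (‖a‖ ^ 2 + (p - 1) * ‖b‖ ^ 2) ^ (p / 2) ≤ ‖a + b‖ ^ p + ‖a - b‖ ^ p := by
  have hc := abs_le.mp (abs_real_inner_le_norm a b)
  have hφ := Real.concaveOn_rpow (p := p / 2) (by positivity) (by linarith)
  have hpair := hφ.add_le_add_sub (x := (‖a‖ - ‖b‖) ^ 2) (y := ‖a + b‖ ^ 2)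
    (z := (‖a‖ + ‖b‖) ^ 2) (mem_Ici.mpr (sq_nonneg _)) (mem_Ici.mpr (sq_nonneg _))
    (by rw [norm_add_sq_real]; nlinarith) (by rw [norm_add_sq_real]; nlinarith)
  have hsub : (‖a‖ - ‖b‖) ^ 2 + (‖a‖ + ‖b‖) ^ 2 - ‖a + b‖ ^ 2 = ‖a - b‖ ^ 2 := by
    rw [norm_add_sq_real, norm_sub_sq_real]
    ring
  simp only [hsub, sq_rpow_half, abs_norm, abs_of_nonneg (by positivity : 0 ≤ ‖a‖ + ‖b‖)] at hpair
  linarith [two_mul_sq_add_rpow_le hp1 hp2 (norm_nonneg a) (norm_nonneg b)]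

end TwoPoint

section Lp

variable {Ω : Type*} [MeasurableSpace Ω] {μ : Measure Ω}

lemma lintegral_rpow_le_lintegral_mul_rpow {A V : Ω → ℝ≥0∞} {q : ℝ} (hq0 : 0 < q) (hq1 : q < 1)
    (hA : AEMeasurable A μ) (hV : AEMeasurable V μ) (hAV : ∀ x, A x ≤ V x)
    (hV_top : ∀ x, V x ≠ ∞) :
    (∫⁻ x, A x ^ q ∂μ) ^ q⁻¹ ≤
      (∫⁻ x, A x * V x ^ (q - 1) ∂μ) * (∫⁻ x, V x ^ q ∂μ) ^ ((1 - q) / q) := by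
  -- Hölder with exponents `1 / q` and `1 / (1 - q)`
  have hsplit (x : Ω) : A x ^ q = (A x * V x ^ (q - 1)) ^ q * (V x ^ q) ^ (1 - q) := by
    rcases eq_or_ne (V x) 0 with hV0 | hV0
    · simp [le_antisymm (hV0 ▸ hAV x) bot_le, hV0, ENNReal.zero_rpow_of_pos hq0]
    · rw [ENNReal.mul_rpow_of_nonneg _ _ hq0.le, ← ENNReal.rpow_mul, ← ENNReal.rpow_mul, mul_assoc,
        ← ENNReal.rpow_add _ _ hV0 (hV_top x), show (q - 1) * q + q * (1 - q) = 0 by ring,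
        ENNReal.rpow_zero, mul_one]
  have hHolder := ENNReal.lintegral_mul_le_Lp_mul_Lq μ
    (Real.HolderConjugate.inv_one_sub_inv hq0 hq1)
    (f := fun x => (A x * V x ^ (q - 1)) ^ q) (g := fun x => (V x ^ q) ^ (1 - q))
    ((hA.mul (hV.pow_const (q - 1))).pow_const q) ((hV.pow_const q).pow_const (1 - q))
  simp only [Pi.mul_apply, ← hsplit, ENNReal.rpow_rpow_inv hq0.ne',
    ENNReal.rpow_rpow_inv (sub_pos.2 hq1).ne', one_div, inv_inv] at hHolder
  calc (∫⁻ x, A x ^ q ∂μ) ^ q⁻¹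
      ≤ ((∫⁻ x, A x * V x ^ (q - 1) ∂μ) ^ q * (∫⁻ x, V x ^ q ∂μ) ^ (1 - q)) ^ q⁻¹ := by
        gcongr
    _ = _ := by
        rw [ENNReal.mul_rpow_of_nonneg _ _ (by positivity), ← ENNReal.rpow_mul, ← ENNReal.rpow_mul,
          mul_inv_cancel₀ hq0.ne', ENNReal.rpow_one, div_eq_mul_inv]

lemma eLpNorm'_add_eLpNorm'_le_eLpNorm'_add {f g : Ω → ℝ} {q : ℝ} (hq0 : 0 < q) (hq1 : q ≤ 1)
    (hf : AEMeasurable f μ) (hg : AEMeasurable g μ) (hf0 : ∀ x, 0 ≤ f x) (hg0 : ∀ x, 0 ≤ g x) :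
    eLpNorm' f q μ + eLpNorm' g q μ ≤ eLpNorm' (f + g) q μ := by
  have henorm (x : Ω) : ‖(f + g) x‖ₑ = ‖f x‖ₑ + ‖g x‖ₑ := by
    simp only [Pi.add_apply, Real.enorm_of_nonneg (hf0 x), Real.enorm_of_nonneg (hg0 x),
      Real.enorm_of_nonneg (add_nonneg (hf0 x) (hg0 x)), ENNReal.ofReal_add (hf0 x) (hg0 x)]
  obtain rfl | hq1 := hq1.eq_or_lt
  · simp only [eLpNorm'_eq_lintegral_enorm, div_one, ENNReal.rpow_one, henorm]
    exact (lintegral_add_left' hf.enorm _).ge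
  set V : Ω → ℝ≥0∞ := fun x => ‖(f + g) x‖ₑ
  have hV : AEMeasurable V μ := (hf.add hg).enorm
  have hbound {A : Ω → ℝ≥0∞} (hA : AEMeasurable A μ) (hAV : ∀ x, A x ≤ V x) :=
    lintegral_rpow_le_lintegral_mul_rpow hq0 hq1 hA hV hAV (fun _ => enorm_ne_top)
  have hself : ∫⁻ x, ‖f x‖ₑ * V x ^ (q - 1) ∂μ + ∫⁻ x, ‖g x‖ₑ * V x ^ (q - 1) ∂μ =
      ∫⁻ x, V x ^ q ∂μ := by
    rw [← lintegral_add_left' (f := fun x => ‖f x‖ₑ * V x ^ (q - 1))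
      (hf.enorm.mul (hV.pow_const _))]
    refine lintegral_congr fun x => ?_
    rw [← add_mul, ← henorm]
    change V x * V x ^ (q - 1) = V x ^ q
    rcases eq_or_ne (V x) 0 with hV0 | hV0
    · simp [hV0, ENNReal.zero_rpow_of_pos hq0]
    · conv_rhs => rw [show q = 1 + (q - 1) by ring, ENNReal.rpow_add _ _ hV0 enorm_ne_top,
        ENNReal.rpow_one]
  simp only [eLpNorm'_eq_lintegral_enorm, one_div]
  calc _ ≤ (∫⁻ x, ‖f x‖ₑ * V x ^ (q - 1) ∂μ) * (∫⁻ x, V x ^ q ∂μ) ^ ((1 - q) / q) +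
        (∫⁻ x, ‖g x‖ₑ * V x ^ (q - 1) ∂μ) * (∫⁻ x, V x ^ q ∂μ) ^ ((1 - q) / q) :=
        add_le_add (hbound hf.enorm fun x => by simp only [V, henorm]; exact le_self_add)
          (hbound hg.enorm fun x => by simp only [V, henorm]; exact le_add_self)
    _ = (∫⁻ x, V x ^ q ∂μ) ^ q⁻¹ := by
        rw [← add_mul, hself]
        conv_lhs => enter [1]; rw [← ENNReal.rpow_one (∫⁻ x, V x ^ q ∂μ)]
        rw [← ENNReal.rpow_add_of_nonneg _ _ zero_le_one (div_nonneg (by linarith) hq0.le)]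
        congr 1
        field_simp
        ring

lemma two_mul_eLpNorm_sq_add_le {E : Type*} [NormedAddCommGroup E] [InnerProductSpace ℝ E]
    {p : ℝ} (hp1 : 1 ≤ p) (hp2 : p ≤ 2) {u v : Ω → E} (hu : AEStronglyMeasurable u μ)
    (hv : AEStronglyMeasurable v μ) :
    2 * eLpNorm u (.ofReal p) μ ^ 2 + 2 * ENNReal.ofReal (p - 1) * eLpNorm v (.ofReal p) μ ^ 2 ≤
      eLpNorm (u + v) (.ofReal p) μ ^ 2 + eLpNorm (u - v) (.ofReal p) μ ^ 2 := by
  have hp0 : 0 < p := by linarith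
  simp only [eLpNorm_eq_eLpNorm' (ENNReal.ofReal_pos.2 hp0).ne' ENNReal.ofReal_ne_top,
    ENNReal.toReal_ofReal hp0.le]
  set F : Ω → ℝ := fun x => ‖u x‖ ^ (2 : ℝ)
  set G : Ω → ℝ := (p - 1) • fun x => ‖v x‖ ^ (2 : ℝ)
  have hF : eLpNorm' F (p / 2) μ = eLpNorm' u p μ ^ 2 := by
    rw [eLpNorm'_norm_rpow _ _ _ two_pos, div_mul_cancel₀ _ two_ne_zero, ENNReal.rpow_two]
  have hG : eLpNorm' G (p / 2) μ = ENNReal.ofReal (p - 1) * eLpNorm' v p μ ^ 2 := by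
    rw [eLpNorm'_const_smul _ (by positivity), eLpNorm'_norm_rpow _ _ _ two_pos,
      div_mul_cancel₀ _ two_ne_zero, ENNReal.rpow_two, Real.enorm_of_nonneg (by linarith)]
  have hpoint (x : Ω) :
      ‖(F + G) x‖ₑ ^ (p / 2) ≤ 2⁻¹ * ‖(u + v) x‖ₑ ^ p + 2⁻¹ * ‖(u - v) x‖ₑ ^ p := by
    have hFGx : (F + G) x = ‖u x‖ ^ 2 + (p - 1) * ‖v x‖ ^ 2 := by
      simp [F, G]
    have hnn : 0 ≤ ‖u x‖ ^ 2 + (p - 1) * ‖v x‖ ^ 2 := by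
      have : 0 ≤ p - 1 := by linarith
      positivity
    rw [hFGx, Real.enorm_of_nonneg hnn, ← ofReal_norm, ← ofReal_norm,
      ENNReal.ofReal_rpow_of_nonneg hnn (by positivity),
      ENNReal.ofReal_rpow_of_nonneg (norm_nonneg _) hp0.le,
      ENNReal.ofReal_rpow_of_nonneg (norm_nonneg _) hp0.le, ← ENNReal.ofReal_ofNat 2,
      ← ENNReal.ofReal_inv_of_pos two_pos, ← ENNReal.ofReal_mul (by norm_num),
      ← ENNReal.ofReal_mul (by norm_num), ← ENNReal.ofReal_add (by positivity) (by positivity)]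
    apply ENNReal.ofReal_le_ofReal
    simp only [Pi.add_apply, Pi.sub_apply]
    linarith [two_mul_norm_sq_add_rpow_le hp1 hp2 (u x) (v x)]
  have hFG : eLpNorm' (F + G) (p / 2) μ ^ (p / 2) ≤
      2⁻¹ * eLpNorm' (u + v) p μ ^ p + 2⁻¹ * eLpNorm' (u - v) p μ ^ p := by
    rw [← lintegral_rpow_enorm_eq_rpow_eLpNorm' (by positivity),
      ← lintegral_rpow_enorm_eq_rpow_eLpNorm' hp0, ← lintegral_rpow_enorm_eq_rpow_eLpNorm' hp0,
      ← lintegral_const_mul' _ _ (by simp), ← lintegral_const_mul' _ _ (by simp),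
      ← lintegral_add_left' (((hu.add hv).enorm.pow_const p).const_mul _)]
    exact lintegral_mono hpoint
  have hmean := ENNReal.rpow_arith_mean_le_arith_mean2_rpow 2⁻¹ 2⁻¹
    (eLpNorm' (u + v) p μ ^ p) (eLpNorm' (u - v) p μ ^ p) ENNReal.inv_two_add_inv_two
    (one_le_inv₀ (by positivity) |>.2 (by linarith : p / 2 ≤ 1))
  have hsq (y : ℝ≥0∞) : (y ^ p) ^ (p / 2)⁻¹ = y ^ 2 := by
    rw [← ENNReal.rpow_mul, show p * (p / 2)⁻¹ = 2 by field_simp, ENNReal.rpow_two]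
  have hRM := eLpNorm'_add_eLpNorm'_le_eLpNorm'_add (μ := μ) (f := F) (g := G) (q := p / 2)
    (by positivity) (by linarith) (hu.norm.aemeasurable.pow_const _)
    ((hv.norm.aemeasurable.pow_const _).const_smul _) (fun x => by positivity)
    (fun x => mul_nonneg (by linarith) (by positivity))
  rw [hF, hG, ← ENNReal.rpow_rpow_inv (by positivity : p / 2 ≠ 0) (eLpNorm' (F + G) _ μ)] at hRM
  calc 2 * eLpNorm' u p μ ^ 2 + 2 * ENNReal.ofReal (p - 1) * eLpNorm' v p μ ^ 2
      = 2 * (eLpNorm' u p μ ^ 2 + ENNReal.ofReal (p - 1) * eLpNorm' v p μ ^ 2) := by ring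
    _ ≤ 2 * (2⁻¹ * eLpNorm' (u + v) p μ ^ 2 + 2⁻¹ * eLpNorm' (u - v) p μ ^ 2) := by
        gcongr 2 * ?_
        calc _ ≤ _ := hRM
          _ ≤ _ := by gcongr
          _ ≤ _ := hmean
          _ = _ := by rw [hsq, hsq]
    _ = eLpNorm' (u + v) p μ ^ 2 + eLpNorm' (u - v) p μ ^ 2 := by
        rw [mul_add, ← mul_assoc, ← mul_assoc,
          ENNReal.mul_inv_cancel two_ne_zero ENNReal.ofNat_ne_top, one_mul, one_mul]

variable {p : ℝ}

lemma MeasureTheory.MemLp.norm_rpow_sub_one {E : Type*} [NormedAddCommGroup E] {f : Ω → E}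
    (hp : 1 < p) (hf : MemLp f (.ofReal p) μ) :
    MemLp (fun x => ‖f x‖ ^ (p - 1)) (.ofReal p.conjExponent) μ := by
  have := hf.norm_rpow_div (.ofReal (p - 1))
  rwa [ENNReal.toReal_ofReal (by linarith), ← ENNReal.ofReal_div_of_pos (by linarith)] at this

lemma np_nonneg (f : Ω → ℂ) : 0 ≤ np μ p f := ENNReal.toReal_nonneg

lemma np_const_smul (c : ℂ) (f : Ω → ℂ) : np μ p (c • f) = ‖c‖ * np μ p f := by
  rw [np, eLpNorm_const_smul, ENNReal.toReal_mul, toReal_enorm, np]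

lemma np_eq_integral_rpow (hp : 0 < p) {f : Ω → ℂ} (hf : MemLp f (.ofReal p) μ) :
    np μ p f = (∫ x, ‖f x‖ ^ p ∂μ) ^ p⁻¹ := by
  rw [np, hf.eLpNorm_eq_integral_rpow_norm (by simpa using hp) ENNReal.ofReal_ne_top,
    ENNReal.toReal_ofReal hp.le, ENNReal.toReal_ofReal (by positivity)]

lemma integral_norm_rpow_eq (hp : 0 < p) {f : Ω → ℂ} (hf : MemLp f (.ofReal p) μ) :
    ∫ x, ‖f x‖ ^ p ∂μ = np μ p f ^ p := by
  rw [np_eq_integral_rpow hp hf, ← Real.rpow_mul (integral_nonneg fun _ => by positivity),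
    inv_mul_cancel₀ hp.ne', Real.rpow_one]

lemma integral_norm_mul_norm_rpow_le (hp : 1 < p) {f g : Ω → ℂ} (hf : MemLp f (.ofReal p) μ)
    (hg : MemLp g (.ofReal p) μ) :
    ∫ x, ‖g x‖ * ‖f x‖ ^ (p - 1) ∂μ ≤ np μ p g * np μ p f ^ (p - 1) := by
  refine (integral_mul_le_Lp_mul_Lq_of_nonneg (Real.HolderConjugate.conjExponent hp)
    (.of_forall fun _ => norm_nonneg _) (.of_forall fun _ => by positivity) hg.norm
    (hf.norm_rpow_sub_one hp)).trans_eq ?_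
  have hp1 : p - 1 ≠ 0 := by linarith
  simp_rw [← Real.rpow_mul (norm_nonneg _), Real.conjExponent,
    show (p - 1) * (p / (p - 1)) = p by field_simp]
  rw [np_eq_integral_rpow (by linarith) hf, np_eq_integral_rpow (by linarith) hg,
    ← Real.rpow_mul (integral_nonneg fun _ => by positivity), one_div, one_div]
  congr 2
  field_simp

lemma norm_gradE (hp : 1 < p) (f : Ω → ℂ) (x : Ω) :
    ‖gradE μ p f x‖ = np μ p f ^ (2 - p) * ‖f x‖ ^ (p - 1) := by
  rw [gradE, norm_smul, Real.norm_of_nonneg (by have := np_nonneg (μ := μ) (p := p) f; positivity),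
    mul_assoc, show p - 1 = p - 2 + 1 by ring, Real.rpow_add_one' (norm_nonneg _) (by linarith)]

lemma aestronglyMeasurable_gradE {f : Ω → ℂ} (hf : AEStronglyMeasurable f μ) :
    AEStronglyMeasurable (gradE μ p f) μ :=
  (aemeasurable_const.mul (hf.norm.aemeasurable.pow_const _)).aestronglyMeasurable.smul hf

lemma integrable_conj_mul_gradE (hp : 1 < p) {f g : Ω → ℂ} (hf : MemLp f (.ofReal p) μ)
    (hg : MemLp g (.ofReal p) μ) :
    Integrable (fun x => conj (g x) * gradE μ p f x) μ := by
  have := (Real.HolderConjugate.conjExponent hp).ennrealOfReal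
  refine Integrable.mono' ((hg.norm.integrable_mul (hf.norm_rpow_sub_one hp)).const_mul
    (np μ p f ^ (2 - p))) ((continuous_conj.comp_aestronglyMeasurable hg.1).mul
    (aestronglyMeasurable_gradE hf.1)) (.of_forall fun x => ?_)
  rw [norm_mul, norm_conj, norm_gradE hp, Pi.mul_apply]
  exact (mul_left_comm _ _ _).le

lemma pairL_gradE_le (hp : 1 < p) {f g : Ω → ℂ} (hf : MemLp f (.ofReal p) μ)
    (hg : MemLp g (.ofReal p) μ) :
    pairL μ g (gradE μ p f) ≤ 2 * (np μ p g * np μ p f) := by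
  have hN := np_nonneg (μ := μ) (p := p) f
  calc pairL μ g (gradE μ p f) ≤ 2 * ∫ x, ‖conj (g x) * gradE μ p f x‖ ∂μ := by
        unfold pairL
        gcongr
        exact (re_le_norm _).trans (norm_integral_le_integral_norm _)
    _ = 2 * (np μ p f ^ (2 - p) * ∫ x, ‖g x‖ * ‖f x‖ ^ (p - 1) ∂μ) := by
        simp_rw [norm_mul, norm_conj, norm_gradE hp, ← integral_const_mul]
        congr 2 with x
        ring
    _ ≤ 2 * (np μ p f ^ (2 - p) * (np μ p g * np μ p f ^ (p - 1))) := by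
        gcongr
        exact integral_norm_mul_norm_rpow_le hp hf hg
    _ = 2 * (np μ p g * np μ p f) := by
        rw [show np μ p f ^ (2 - p) * (np μ p g * np μ p f ^ (p - 1)) =
          np μ p g * (np μ p f ^ (2 - p) * np μ p f ^ (p - 1)) by ring,
          ← Real.rpow_add' hN (by norm_num)]
        norm_num

lemma pairL_self_gradE (hp : 1 < p) {f : Ω → ℂ} (hf : MemLp f (.ofReal p) μ) :
    pairL μ f (gradE μ p f) = 2 * np μ p f ^ 2 := by
  have hN := np_nonneg (μ := μ) (p := p) f
  have hpt (x : Ω) : conj (f x) * gradE μ p f x = ((np μ p f ^ (2 - p) * ‖f x‖ ^ p : ℝ) : ℂ) := by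
    rw [gradE, real_smul, mul_left_comm, conj_mul', ← ofReal_pow, ← ofReal_mul, mul_assoc,
      ← Real.rpow_two, ← Real.rpow_add' (norm_nonneg _) (by linarith)]
    norm_num
  simp_rw [pairL, hpt, integral_complex_ofReal, ofReal_re, integral_const_mul,
    integral_norm_rpow_eq (by linarith) hf, ← Real.rpow_add' hN (by norm_num : 2 - p + p ≠ 0)]
  norm_num

lemma pairL_sub {f g w : Ω → ℂ} (hf : Integrable (fun x => conj (f x) * w x) μ)
    (hg : Integrable (fun x => conj (g x) * w x) μ) :
    pairL μ (f - g) w = pairL μ f w - pairL μ g w := by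
  simp only [pairL, Pi.sub_apply, map_sub, sub_mul]
  rw [integral_sub hf hg, sub_re]
  ring

lemma pairL_ofReal_smul (t : ℝ) (f w : Ω → ℂ) : pairL μ ((t : ℂ) • f) w = t * pairL μ f w := by
  simp only [pairL, Pi.smul_apply, smul_eq_mul, map_mul, conj_ofReal, mul_assoc,
    integral_const_mul, re_ofReal_mul]
  ring

lemma np_sq_add_pairL_gradE_le (hp : 1 < p) {f g : Ω → ℂ} (hf : MemLp f (.ofReal p) μ)
    (hg : MemLp g (.ofReal p) μ) :
    np μ p f ^ 2 + pairL μ (g - f) (gradE μ p f) ≤ np μ p g ^ 2 := by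
  rw [pairL_sub (integrable_conj_mul_gradE hp hf hg) (integrable_conj_mul_gradE hp hf hf),
    pairL_self_gradE hp hf]
  nlinarith [pairL_gradE_le hp hf hg, sq_nonneg (np μ p g - np μ p f)]

lemma two_mul_np_sq_add_le (hp1 : 1 ≤ p) (hp2 : p ≤ 2) {u v : Ω → ℂ}
    (hu : MemLp u (.ofReal p) μ) (hv : MemLp v (.ofReal p) μ) :
    2 * np μ p u ^ 2 + 2 * (p - 1) * np μ p v ^ 2 ≤ np μ p (u + v) ^ 2 + np μ p (u - v) ^ 2 := by
  have h := two_mul_eLpNorm_sq_add_le hp1 hp2 hu.1 hv.1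
  have := (hu.add hv).eLpNorm_ne_top
  have := (hu.sub hv).eLpNorm_ne_top
  have := hu.eLpNorm_ne_top
  have := hv.eLpNorm_ne_top
  have := ENNReal.toReal_mono (by finiteness) h
  rw [ENNReal.toReal_add (by finiteness) (by finiteness),
    ENNReal.toReal_add (by finiteness) (by finiteness)] at this
  simpa [np, ENNReal.toReal_ofReal (by linarith : 0 ≤ p - 1)] using this

end Lp

lemma le_sub_of_two_mul_half_le {h : ℝ → ℝ} {a c : ℝ}
    (hmid : ∀ t > 0, 2 * h (t / 2) ≤ h 0 + h t) (hslope : ∀ t > 0, t * a ≤ h t - h 0 + c * t ^ 2) :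
    a ≤ h 1 - h 0 := by
  have hdyadic (n : ℕ) : 2 ^ n * (h (2⁻¹ ^ n) - h 0) ≤ h 1 - h 0 := by
    induction n with
    | zero => simp
    | succ n ih =>
      have := hmid (2⁻¹ ^ n) (by positivity)
      rw [pow_succ, pow_succ, ← div_eq_mul_inv]
      nlinarith [pow_pos (two_pos (α := ℝ)) n]
  have hbound (n : ℕ) : a - c * 2⁻¹ ^ n ≤ h 1 - h 0 := by
    have h2n : (2 : ℝ) ^ n * 2⁻¹ ^ n = 1 := by rw [← mul_pow]; norm_num
    have := hslope (2⁻¹ ^ n) (by positivity)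
    calc a - c * 2⁻¹ ^ n = 2 ^ n * (2⁻¹ ^ n * a) - c * 2⁻¹ ^ n := by rw [← mul_assoc, h2n, one_mul]
      _ ≤ 2 ^ n * (h (2⁻¹ ^ n) - h 0 + c * (2⁻¹ ^ n) ^ 2) - c * 2⁻¹ ^ n := by gcongr
      _ = 2 ^ n * (h (2⁻¹ ^ n) - h 0) := by linear_combination c * 2⁻¹ ^ n * h2n
      _ ≤ h 1 - h 0 := hdyadic n
  refine le_of_tendsto' (x := Filter.atTop) ?_ hbound
  simpa using (tendsto_pow_atTop_nhds_zero_of_lt_one (by norm_num : (0 : ℝ) ≤ 2⁻¹)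
    (by norm_num)).const_mul c |>.const_sub a

/-- for `1 < p ≤ 2`, the squared `L^p` norm is `(p-1)`-convex:
`E(f₂) ≥ E(f₁) + ⟨f₂ - f₁, ∇E(f₁)⟩ + (p-1)‖f₂-f₁‖_p²`. -/
theorem stmt_11 {Ω : Type*} [MeasurableSpace Ω] (μ : Measure Ω) (p : ℝ)
    (hp : 1 < p) (hp2 : p ≤ 2) :
    ∀ f₁ f₂ : Ω → ℂ, MemLp f₁ (ENNReal.ofReal p) μ → MemLp f₂ (ENNReal.ofReal p) μ →
      np μ p f₁ ^ 2 + pairL μ (f₂ - f₁) (gradE μ p f₁) + (p - 1) * np μ p (f₂ - f₁) ^ 2 ≤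
        np μ p f₂ ^ 2 := by
  intro f₁ f₂ hf₁ hf₂
  set g := f₂ - f₁
  have hg : MemLp g (.ofReal p) μ := hf₂.sub hf₁
  have hpath (t : ℝ) : MemLp (f₁ + (t : ℂ) • g) (.ofReal p) μ := hf₁.add (hg.const_smul _)
  have key := le_sub_of_two_mul_half_le
    (h := fun t : ℝ => np μ p (f₁ + (t : ℂ) • g) ^ 2 - (p - 1) * np μ p g ^ 2 * t ^ 2)
    (a := pairL μ g (gradE μ p f₁)) (c := (p - 1) * np μ p g ^ 2) ?mid ?slope
  · simp only [ofReal_zero, ofReal_one, zero_smul, one_smul, add_zero, g, add_sub_cancel] at key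
    linarith
  case mid =>
    intro t ht
    have hconv := two_mul_np_sq_add_le hp.le hp2 (hpath (t / 2)) (hg.const_smul ((t / 2 : ℝ) : ℂ))
    rw [add_assoc, ← add_smul, ← ofReal_add, add_halves, add_sub_cancel_right, np_const_smul,
      norm_real, Real.norm_of_nonneg (by positivity)] at hconv
    simp only [ofReal_zero, zero_smul, add_zero]
    linear_combination hconv
  case slope =>
    intro t ht
    have htangent := np_sq_add_pairL_gradE_le hp hf₁ (hpath t)
    rw [add_sub_cancel_left, pairL_ofReal_smul] at htangent
    simp only [ofReal_zero, zero_smul, add_zero]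
    linarith
end
end

section
/- For f, g complex-valued functions with f(x) + tg(x) ≠ 0 for all t ∈ ℝ (simple functions on sets of finite measure), 1 < p ≤ 2, the function t ↦ ‖f+tg‖_p² satisfies d²/dt² ‖f+tg‖_p² ≥ 2(p-1)‖g‖_p² for all t. -/
open MeasureTheory

noncomputable section

/-!
Write `Y(t) = ∫ |f + t g|ᵖ`, so that the function is `Y^{2/p}`. Since `2/p ≥ 1`, its second
derivative is at least `(2/p) Y^{2/p-1} Y''`. Pointwise, Cauchy–Schwarz gives
`d²/dt² |f + t g|ᵖ ≥ p(p-1) |f + t g|^{p-2} |g|²`, and the reverse Hölder inequality bounds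
`‖g‖ₚ²` by `Y^{2/p-1} ∫ |f + t g|^{p-2} |g|²`; the two combine to the factor `2(p-1)`.
For simple `f, g` every integral is a finite sum weighted by the measures of the level sets of
`(f, g)`, and the estimate holds for such sums with values in any real inner product space.
-/

open scoped ENNReal RealInnerProductSpace

lemma sq_rpow_div_two {x : ℝ} (hx : 0 ≤ x) (p : ℝ) : (x ^ 2) ^ (p / 2) = x ^ p := by
  rw [← Real.rpow_natCast_mul hx]; congr 1; push_cast; ring

section InnerProductSpace

variable {F : Type*} [NormedAddCommGroup F] [InnerProductSpace ℝ F]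

lemma hasDerivAt_norm_add_smul_rpow (a b : F) (p : ℝ) {u : ℝ} (h : a + u • b ≠ 0) :
    HasDerivAt (fun v : ℝ => ‖a + v • b‖ ^ p) (p * ‖a + u • b‖ ^ (p - 2) * ⟪a + u • b, b⟫) u := by
  have hline : HasDerivAt (fun v : ℝ => a + v • b) b u := by
    simpa using ((hasDerivAt_id u).smul_const b).const_add a
  have hsq := hline.norm_sq.rpow_const (p := p / 2) (Or.inl (by positivity))
  convert hsq using 1
  · simp only [sq_rpow_div_two (norm_nonneg _)]
  · rw [show p / 2 - 1 = (p - 2) / 2 by ring, sq_rpow_div_two (norm_nonneg _)]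
    ring

lemma hasDerivAt_deriv_norm_add_smul_rpow (a b : F) (p : ℝ) {t : ℝ} (h : a + t • b ≠ 0) :
    HasDerivAt (fun u : ℝ => p * ‖a + u • b‖ ^ (p - 2) * ⟪a + u • b, b⟫)
      (p * ((p - 2) * ‖a + t • b‖ ^ (p - 4) * ⟪a + t • b, b⟫ ^ 2
        + ‖a + t • b‖ ^ (p - 2) * ‖b‖ ^ 2)) t := by
  have hinner : HasDerivAt (fun u : ℝ => ⟪a + u • b, b⟫) (‖b‖ ^ 2) t := by
    have : (fun u : ℝ => ⟪a + u • b, b⟫) = fun u => ⟪a, b⟫ + u * ‖b‖ ^ 2 := by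
      funext u; rw [inner_add_left, real_inner_smul_left, real_inner_self_eq_norm_sq]
    rw [this]
    simpa using ((hasDerivAt_id t).mul_const (‖b‖ ^ 2)).const_add ⟪a, b⟫
  have hpow := hasDerivAt_norm_add_smul_rpow a b (p - 2) h
  rw [show p - 2 - 2 = p - 4 by ring] at hpow
  have hprod := (hpow.fun_mul hinner).const_mul p
  simp only [← mul_assoc] at hprod
  exact hprod.congr_deriv (by ring)

lemma mul_norm_rpow_le_second_deriv {p : ℝ} (hp0 : 0 ≤ p) (hp2 : p ≤ 2) {z : F} (hz : z ≠ 0)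
    (b : F) :
    p * (p - 1) * ‖z‖ ^ (p - 2) * ‖b‖ ^ 2 ≤
      p * ((p - 2) * ‖z‖ ^ (p - 4) * ⟪z, b⟫ ^ 2 + ‖z‖ ^ (p - 2) * ‖b‖ ^ 2) := by
  have hz0 : 0 < ‖z‖ := norm_pos_iff.mpr hz
  have hcs : ⟪z, b⟫ ^ 2 ≤ ‖z‖ ^ 2 * ‖b‖ ^ 2 := by
    rw [← mul_pow, ← sq_abs]
    exact pow_le_pow_left₀ (abs_nonneg _) (abs_real_inner_le_norm z b) 2
  have hpow : ‖z‖ ^ (p - 4) * ‖z‖ ^ 2 = ‖z‖ ^ (p - 2) := by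
    rw [← Real.rpow_natCast, ← Real.rpow_add hz0]; congr 1; ring
  have key : (p - 2) * ‖z‖ ^ (p - 2) * ‖b‖ ^ 2 ≤ (p - 2) * ‖z‖ ^ (p - 4) * ⟪z, b⟫ ^ 2 := by
    rw [← hpow, mul_assoc, mul_assoc, mul_assoc]
    refine mul_le_mul_of_nonpos_left ?_ (by linarith)
    exact mul_le_mul_of_nonneg_left hcs (by positivity)
  nlinarith [key]

end InnerProductSpace

lemma hasDerivAt_rpow_mul_deriv {Y Y' : ℝ → ℝ} {Y'' q t : ℝ} (hY : HasDerivAt Y (Y' t) t)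
    (hY' : HasDerivAt Y' Y'' t) (ht : Y t ≠ 0) :
    HasDerivAt (fun u => q * Y u ^ (q - 1) * Y' u)
      (q * ((q - 1) * Y t ^ (q - 2) * Y' t ^ 2 + Y t ^ (q - 1) * Y'')) t := by
  have hpow := hY.rpow_const (p := q - 1) (Or.inl ht)
  rw [show q - 1 - 1 = q - 2 by ring] at hpow
  have hprod := (hpow.fun_mul hY').const_mul q
  simp only [← mul_assoc] at hprod
  exact hprod.congr_deriv (by ring)

-- Reverse Hölder inequality with exponent `p/2 ≤ 1`, obtained from weighted Hölder with exponent
-- `2/p` and weights `w i * x i ^ p`.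
lemma rpow_sum_mul_rpow_le {ι : Type*} (s : Finset ι) {w x y : ι → ℝ} {p : ℝ} (hp0 : 0 < p)
    (hp2 : p ≤ 2) (hw : ∀ i, 0 ≤ w i) (hx : ∀ i, 0 ≤ x i) (hx0 : ∀ i ∈ s, x i ≠ 0)
    (hy : ∀ i, 0 ≤ y i) :
    (∑ i ∈ s, w i * y i ^ p) ^ (2 / p) ≤
      (∑ i ∈ s, w i * x i ^ p) ^ (2 / p - 1) * ∑ i ∈ s, w i * x i ^ (p - 2) * y i ^ 2 := by
  have hholder := Real.inner_le_weight_mul_Lp_of_nonneg s (p := 2 / p)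
    ((one_le_div hp0).mpr hp2) (fun i => w i * x i ^ p) (fun i => (y i / x i) ^ p)
    (fun i => mul_nonneg (hw i) (Real.rpow_nonneg (hx i) p))
    (fun i => Real.rpow_nonneg (div_nonneg (hy i) (hx i)) p)
  have hlhs : ∀ i ∈ s, w i * x i ^ p * (y i / x i) ^ p = w i * y i ^ p := by
    intro i hi
    have hxp : x i ^ p ≠ 0 := (Real.rpow_pos_of_pos ((hx i).lt_of_ne' (hx0 i hi)) p).ne'
    rw [Real.div_rpow (hy i) (hx i), mul_assoc, mul_div_cancel₀ _ hxp]
  have hrhs : ∀ i ∈ s,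
      w i * x i ^ p * ((y i / x i) ^ p) ^ (2 / p) = w i * x i ^ (p - 2) * y i ^ 2 := by
    intro i hi
    have hxi := (hx i).lt_of_ne' (hx0 i hi)
    rw [← Real.rpow_mul (div_nonneg (hy i) (hx i)), mul_div_cancel₀ _ hp0.ne', Real.rpow_two,
      Real.rpow_sub hxi, Real.rpow_two]
    field_simp
  rw [Finset.sum_congr rfl hlhs, Finset.sum_congr rfl hrhs, inv_div] at hholder
  set Y := ∑ i ∈ s, w i * x i ^ p
  set S := ∑ i ∈ s, w i * x i ^ (p - 2) * y i ^ 2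
  have hY : 0 ≤ Y := Finset.sum_nonneg fun i _ => mul_nonneg (hw i) (by have := hx i; positivity)
  have hS : 0 ≤ S := Finset.sum_nonneg fun i _ => by have := hw i; have := hx i; positivity
  calc (∑ i ∈ s, w i * y i ^ p) ^ (2 / p)
      ≤ (Y ^ (1 - p / 2) * S ^ (p / 2)) ^ (2 / p) :=
        Real.rpow_le_rpow (Finset.sum_nonneg fun i _ => by have := hw i; have := hy i; positivity)
          hholder (by positivity)
    _ = Y ^ (2 / p - 1) * S := by
        rw [Real.mul_rpow (by positivity) (by positivity), ← Real.rpow_mul hY, ← Real.rpow_mul hS,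
          div_mul_div_cancel₀ two_ne_zero, div_self hp0.ne', Real.rpow_one]
        congr 2
        field_simp

theorem exists_hasDerivAt_deriv_rpow_sum_norm_add_smul_rpow {ι F : Type*} [NormedAddCommGroup F]
    [InnerProductSpace ℝ F] {s : Finset ι} {w : ι → ℝ} {a b : ι → F} {p : ℝ} (hp : 1 < p)
    (hp2 : p ≤ 2) (hw : ∀ i, 0 ≤ w i) (hne : ∀ i ∈ s, ∀ u : ℝ, a i + u • b i ≠ 0) (t : ℝ) :
    ∃ c, HasDerivAt (deriv fun u : ℝ => (∑ i ∈ s, w i * ‖a i + u • b i‖ ^ p) ^ (2 / p)) c t ∧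
      2 * (p - 1) * (∑ i ∈ s, w i * ‖b i‖ ^ p) ^ (2 / p) ≤ c := by
  set Y := fun u : ℝ => ∑ i ∈ s, w i * ‖a i + u • b i‖ ^ p
  set Y' := fun u : ℝ => ∑ i ∈ s, w i * (p * ‖a i + u • b i‖ ^ (p - 2) * ⟪a i + u • b i, b i⟫)
  have hY : ∀ u, HasDerivAt Y (Y' u) u := fun u =>
    HasDerivAt.fun_sum fun i hi => (hasDerivAt_norm_add_smul_rpow _ _ p (hne i hi u)).const_mul _
  set S := ∑ i ∈ s, w i * ‖a i + t • b i‖ ^ (p - 2) * ‖b i‖ ^ 2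
  obtain ⟨Y'', hY', hY''⟩ : ∃ Y'', HasDerivAt Y' Y'' t ∧ p * (p - 1) * S ≤ Y'' := by
    refine ⟨_, HasDerivAt.fun_sum fun i hi =>
      (hasDerivAt_deriv_norm_add_smul_rpow (a i) (b i) p (hne i hi t)).const_mul (w i), ?_⟩
    rw [Finset.mul_sum]
    refine Finset.sum_le_sum fun i hi => ?_
    have := mul_le_mul_of_nonneg_left
      (mul_norm_rpow_le_second_deriv (by linarith) hp2 (hne i hi t) (b i)) (hw i)
    linarith
  have hq : 1 ≤ 2 / p := (one_le_div (by linarith)).mpr hp2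
  have hderiv : deriv (fun u => Y u ^ (2 / p)) = fun u => 2 / p * Y u ^ (2 / p - 1) * Y' u :=
    funext fun u => ((hY u).rpow_const (Or.inr hq)).deriv.trans (by ring)
  by_cases hw0 : ∀ i ∈ s, w i = 0
  · have hzero : ∀ c : ι → ℝ, ∑ i ∈ s, w i * c i = 0 := fun c =>
      Finset.sum_eq_zero fun i hi => by rw [hw0 i hi, zero_mul]
    refine ⟨0, ?_, ?_⟩
    · simp only [hzero, deriv_const']
      exact hasDerivAt_const t (0 : ℝ)
    · rw [hzero, Real.zero_rpow (by positivity), mul_zero]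
  push Not at hw0
  obtain ⟨j, hj, hwj⟩ := hw0
  have hYt : 0 < Y t := Finset.sum_pos' (fun i _ => mul_nonneg (hw i) (by positivity))
    ⟨j, hj, mul_pos ((hw j).lt_of_ne' hwj) (by have := norm_pos_iff.mpr (hne j hj t); positivity)⟩
  have hF := hasDerivAt_rpow_mul_deriv (q := 2 / p) (hY t) hY' hYt.ne'
  rw [← hderiv] at hF
  refine ⟨_, hF, ?_⟩
  have hholder := rpow_sum_mul_rpow_le s (x := fun i => ‖a i + t • b i‖) (y := fun i => ‖b i‖)
    (by linarith) hp2 hw (fun _ => norm_nonneg _) (fun i hi => norm_ne_zero_iff.mpr (hne i hi t))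
    (fun _ => norm_nonneg _)
  calc 2 * (p - 1) * (∑ i ∈ s, w i * ‖b i‖ ^ p) ^ (2 / p)
      ≤ 2 * (p - 1) * (Y t ^ (2 / p - 1) * S) := by gcongr
    _ = 2 / p * Y t ^ (2 / p - 1) * (p * (p - 1) * S) := by field_simp
    _ ≤ 2 / p * Y t ^ (2 / p - 1) * Y'' := by gcongr
    _ ≤ _ := by
        have : 0 ≤ (2 / p - 1) * Y t ^ (2 / p - 2) * Y' t ^ 2 := by positivity
        nlinarith

lemma np_sq_comp_simpleFunc {Ω β : Type*} [MeasurableSpace Ω] (μ : Measure Ω) {p : ℝ}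
    (hp : 0 < p) (sh : SimpleFunc Ω β) (hsh : ∀ y ∈ sh.range, μ (sh ⁻¹' {y}) ≠ ∞) (φ : β → ℂ) :
    np μ p (fun x => φ (sh x)) ^ 2 =
      (∑ y ∈ sh.range, μ.real (sh ⁻¹' {y}) * ‖φ y‖ ^ p) ^ (2 / p) := by
  have hsum : 0 ≤ ∑ y ∈ sh.range, μ.real (sh ⁻¹' {y}) * ‖φ y‖ ^ p :=
    Finset.sum_nonneg fun y _ => by positivity
  have hmap : (fun x => ‖φ (sh x)‖ₑ ^ p) = ⇑(sh.map fun y => ‖φ y‖ₑ ^ p) := rfl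
  rw [np, eLpNorm_eq_eLpNorm' (by simpa using hp) ENNReal.ofReal_ne_top,
    ENNReal.toReal_ofReal hp.le, eLpNorm'_eq_lintegral_enorm, hmap,
    SimpleFunc.lintegral_eq_lintegral, SimpleFunc.map_lintegral, ← ENNReal.toReal_rpow,
    ENNReal.toReal_sum fun y hy => ENNReal.mul_ne_top (by simp [hp.le]) (hsh y hy)]
  simp only [ENNReal.toReal_mul, ← ENNReal.toReal_rpow, toReal_enorm, ← measureReal_def,
    mul_comm (‖_‖ ^ p)]
  rw [← Real.rpow_natCast, ← Real.rpow_mul hsum]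
  norm_num [div_eq_inv_mul]

theorem stmt_12_general {Ω : Type*} [MeasurableSpace Ω] (μ : Measure Ω) (p : ℝ)
    (hp : 1 < p) (hp2 : p ≤ 2) (f g : Ω → ℂ)
    (hf : MemLp f (ENNReal.ofReal p) μ)
    (hfsimple : ∃ sf : SimpleFunc Ω ℂ, f = sf) (hgsimple : ∃ sg : SimpleFunc Ω ℂ, g = sg)
    (hne : ∀ (x : Ω) (t : ℝ), f x + t • g x ≠ 0) :
    ∀ t : ℝ, ∃ c : ℝ,
      HasDerivAt (deriv fun s : ℝ => np μ p (f + s • g) ^ 2) c t ∧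
      2 * (p - 1) * np μ p g ^ 2 ≤ c := by
  obtain ⟨sf, rfl⟩ := hfsimple
  obtain ⟨sg, rfl⟩ := hgsimple
  intro t
  set sh := sf.pair sg
  have hne_range : ∀ y ∈ sh.range, ∀ u : ℝ, y.1 + u • y.2 ≠ 0 := by
    rintro _ hy u
    obtain ⟨x, rfl⟩ := SimpleFunc.mem_range.mp hy
    exact hne x u
  -- each level set of `(f, g)` lies in a level set of `f ∈ Lᵖ` at a nonzero value
  have hfin : ∀ y ∈ sh.range, μ (sh ⁻¹' {y}) ≠ ∞ := by
    intro y hy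
    refine ne_top_of_le_ne_top ?_ (measure_mono (s := sh ⁻¹' {y}) (t := sf ⁻¹' {y.1}) ?_)
    · exact (SimpleFunc.measure_preimage_lt_top_of_memLp (by simpa using hp.trans' one_pos)
        ENNReal.ofReal_ne_top sf hf y.1 (by simpa using hne_range y hy 0)).ne
    · rintro x rfl; rfl
  have hnorm := np_sq_comp_simpleFunc μ (by linarith) sh hfin
  obtain ⟨c, hc, hle⟩ := exists_hasDerivAt_deriv_rpow_sum_norm_add_smul_rpow (s := sh.range)
    (w := fun y => μ.real (sh ⁻¹' {y})) hp hp2 (fun _ => measureReal_nonneg) hne_range t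
  refine ⟨c, ?_, ?_⟩
  · convert hc using 2
    funext u
    exact hnorm fun y => y.1 + u • y.2
  · rwa [show (⇑sg : Ω → ℂ) = fun x => (sh x).2 from rfl, hnorm]

/-- for `1 < p ≤ 2` and simple `f, g ∈ L^p` with `f(x) + t g(x) ≠ 0`
for all `x` and all real `t`, the map `t ↦ ‖f + t g‖_p²` satisfies
`d²/dt² ‖f+tg‖_p² ≥ 2(p-1)‖g‖_p²`. -/
theorem stmt_12 {Ω : Type*} [MeasurableSpace Ω] (μ : Measure Ω) (p : ℝ)
    (hp : 1 < p) (hp2 : p ≤ 2) (f g : Ω → ℂ)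
    (hf : MemLp f (ENNReal.ofReal p) μ) (hg : MemLp g (ENNReal.ofReal p) μ)
    (hfsimple : ∃ sf : SimpleFunc Ω ℂ, f = sf) (hgsimple : ∃ sg : SimpleFunc Ω ℂ, g = sg)
    (hne : ∀ (x : Ω) (t : ℝ), f x + t • g x ≠ 0) :
    ∀ t : ℝ, ∃ c : ℝ,
      HasDerivAt (deriv fun s : ℝ => np μ p (f + s • g) ^ 2) c t ∧
      2 * (p - 1) * np μ p g ^ 2 ≤ c :=
  stmt_12_general μ p hp hp2 f g hf hfsimple hgsimple hne
end
end
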